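/- arXiv:1803.09631 — 2 statements merged into one kernel-verified Lean document; each statement's English description precedes it below -/
import Mathlib

section
/- Every extreme point of the intersection of the nullspace of the incidence matrix of a simple connected directed graph (having at least one simple cycle) with the closed unit ℓ¹-ball is a normalized simple cycle vector, i.e., of the form w(C)/‖w(C)‖₁ for some simple cycle C. -/
open Finset

/-- ℓ⁰ "norm": the number of nonzero entries of a vector. -/
noncomputable def l0 {k : ℕ} (x : Fin k → ℝ) : ℕ :=
  (Finset.univ.filter (fun i => x i ≠ 0)).card

/-- ℓ¹ norm of a vector. -/
noncomputable def l1 {k : ℕ} (x : Fin k → ℝ) : ℝ := ∑ i, |x i|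

/-- The spark of a matrix: the smallest number of linearly dependent columns
(`⊤` if the columns are linearly independent). -/
noncomputable def spark {m n : ℕ} (Φ : Matrix (Fin m) (Fin n) ℝ) : ℕ∞ :=
  sInf {k : ℕ∞ | ∃ η : Fin n → ℝ, η ≠ 0 ∧ Φ.mulVec η = 0 ∧ k = (l0 η : ℕ∞)}

/-- A simple directed graph on `m` vertices with `n` edges: no self loops and at
most one edge between any two vertices. -/
structure DiGraph (m n : ℕ) where
  src : Fin n → Fin m
  tgt : Fin n → Fin m
  loopless : ∀ j, src j ≠ tgt j
  simple : ∀ j k : Fin n, ({src j, tgt j} : Finset (Fin m)) = {src k, tgt k} → j = k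

/-- The incidence matrix of a directed graph. -/
noncomputable def inc {m n : ℕ} (G : DiGraph m n) : Matrix (Fin m) (Fin n) ℝ :=
  fun i j => if G.tgt j = i then 1 else if G.src j = i then -1 else 0

/-- The underlying undirected simple graph. -/
def toSG {m n : ℕ} (G : DiGraph m n) : SimpleGraph (Fin m) where
  Adj u v := u ≠ v ∧ ∃ j, (G.src j = u ∧ G.tgt j = v) ∨ (G.src j = v ∧ G.tgt j = u)
  symm := ⟨fun u v h => ⟨h.1.symm, h.2.elim fun j hj => ⟨j, hj.symm⟩⟩⟩
  loopless := ⟨fun u h => h.1 rfl⟩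

/-- `u 0, u 1, …, u (r-1), u 0` is a simple cycle of length `r` in the underlying
undirected graph of `G`. -/
def IsSimpleCycle {m n : ℕ} (G : DiGraph m n) (r : ℕ) (u : ℕ → Fin m) : Prop :=
  3 ≤ r ∧ (∀ i < r, ∀ j < r, u i = u j → i = j) ∧
    ∀ i < r, ∃ j, (G.src j = u i ∧ G.tgt j = u ((i + 1) % r)) ∨
      (G.src j = u ((i + 1) % r) ∧ G.tgt j = u i)

/-- The signed indicator vector `w(C)` of a simple cycle. -/
noncomputable def cycVec {m n : ℕ} (G : DiGraph m n) (r : ℕ) (u : ℕ → Fin m) : Fin n → ℝ :=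
  fun j => ∑ i ∈ Finset.range r,
    ((if G.src j = u i ∧ G.tgt j = u ((i + 1) % r) then (1 : ℝ) else 0) -
     (if G.src j = u ((i + 1) % r) ∧ G.tgt j = u i then (1 : ℝ) else 0))

/-- The girth of (the underlying undirected graph of) `G`: the length of the
shortest simple cycle, `⊤` if `G` is acyclic. -/
noncomputable def dgirth {m n : ℕ} (G : DiGraph m n) : ℕ∞ :=
  sInf {r : ℕ∞ | ∃ (k : ℕ) (u : ℕ → Fin m), IsSimpleCycle G k u ∧ r = (k : ℕ∞)}

/-- The set of normalized simple cycle vectors `w(C)/‖w(C)‖₁`. -/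
noncomputable def W1 {m n : ℕ} (G : DiGraph m n) : Set (Fin n → ℝ) :=
  {z | ∃ r u, IsSimpleCycle G r u ∧ z = (l1 (cycVec G r u))⁻¹ • cycVec G r u}

lemma edge_unique {m n : ℕ} (G : DiGraph m n) {j j' : Fin n} {a b : Fin m}
    (hj : (G.src j = a ∧ G.tgt j = b) ∨ (G.src j = b ∧ G.tgt j = a))
    (hj' : (G.src j' = a ∧ G.tgt j' = b) ∨ (G.src j' = b ∧ G.tgt j' = a)) : j = j' := by
  apply G.simple
  have h1 : ({G.src j, G.tgt j} : Finset (Fin m)) = {a, b} := by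
    rcases hj with ⟨h1, h2⟩ | ⟨h1, h2⟩
    · rw [h1, h2]
    · rw [h1, h2]; exact Finset.pair_comm _ _
  have h2 : ({G.src j', G.tgt j'} : Finset (Fin m)) = {a, b} := by
    rcases hj' with ⟨h1, h2⟩ | ⟨h1, h2⟩
    · rw [h1, h2]
    · rw [h1, h2]; exact Finset.pair_comm _ _
  rw [h1, h2]

lemma term_cases {m n : ℕ} (G : DiGraph m n) {r : ℕ} {u : ℕ → Fin m} {j : Fin n} {i : ℕ}
    (h : ((if G.src j = u i ∧ G.tgt j = u ((i + 1) % r) then (1 : ℝ) else 0) -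
      (if G.src j = u ((i + 1) % r) ∧ G.tgt j = u i then (1 : ℝ) else 0)) ≠ 0) :
    (G.src j = u i ∧ G.tgt j = u ((i + 1) % r)) ∨
      (G.src j = u ((i + 1) % r) ∧ G.tgt j = u i) := by
  by_cases hA : G.src j = u i ∧ G.tgt j = u ((i + 1) % r)
  · exact Or.inl hA
  by_cases hB : G.src j = u ((i + 1) % r) ∧ G.tgt j = u i
  · exact Or.inr hB
  simp [hA, hB] at h

lemma cycVec_ne {m n : ℕ} (G : DiGraph m n) {r : ℕ} {u : ℕ → Fin m}
    (hc : IsSimpleCycle G r u) {j : Fin n}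
    (hj : (G.src j = u 0 ∧ G.tgt j = u 1) ∨ (G.src j = u 1 ∧ G.tgt j = u 0)) :
    cycVec G r u j ≠ 0 := by
  obtain ⟨hr3, hinj, _⟩ := hc
  have e1 : (0 + 1) % r = 1 := Nat.mod_eq_of_lt (by omega)
  have e2 : (1 + 1) % r = 2 := Nat.mod_eq_of_lt (by omega)
  have hmod : ∀ i, (i + 1) % r < r := fun i => Nat.mod_lt _ (by omega)
  unfold cycVec
  rw [Finset.sum_eq_single_of_mem 0 (Finset.mem_range.mpr (by omega))]
  · rw [e1]
    rcases hj with ⟨h1, h2⟩ | ⟨h1, h2⟩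
    · rw [if_pos ⟨h1, h2⟩, if_neg]
      · norm_num
      · rintro ⟨q1, q2⟩
        have : (0 : ℕ) = 1 := hinj 0 (by omega) 1 (by omega) (h1.symm.trans q1)
        omega
    · rw [if_neg, if_pos ⟨h1, h2⟩]
      · norm_num
      · rintro ⟨q1, q2⟩
        have : (1 : ℕ) = 0 := hinj 1 (by omega) 0 (by omega) (h1.symm.trans q1)
        omega
  · intro b hb hb0
    rw [Finset.mem_range] at hb
    by_contra hne
    rcases term_cases G hne with ⟨q1, q2⟩ | ⟨q1, q2⟩ <;>
      rcases hj with ⟨h1, h2⟩ | ⟨h1, h2⟩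
    · exact hb0 (hinj b hb 0 (by omega) (q1.symm.trans h1))
    · have hb1 : b = 1 := hinj b hb 1 (by omega) (q1.symm.trans h1)
      subst hb1
      have : 2 = 0 := hinj 2 (by omega) 0 (by omega) (by rw [← e2, ← q2, h2])
      omega
    · have hb1 : b = 1 := hinj b hb 1 (by omega) (q2.symm.trans h2)
      subst hb1
      have : 2 = 0 := hinj 2 (by omega) 0 (by omega) (by rw [← e2, ← q1, h1])
      omega
    · exact hb0 (hinj b hb 0 (by omega) (q2.symm.trans h2))

lemma incSum {m n : ℕ} (G : DiGraph m n) {a b : Fin m} (hab : a ≠ b) {j₀ : Fin n}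
    (hj₀ : (G.src j₀ = a ∧ G.tgt j₀ = b) ∨ (G.src j₀ = b ∧ G.tgt j₀ = a)) (v : Fin m) :
    ∑ j : Fin n, inc G v j * ((if G.src j = a ∧ G.tgt j = b then (1 : ℝ) else 0) -
      (if G.src j = b ∧ G.tgt j = a then (1 : ℝ) else 0)) =
      (if b = v then 1 else 0) - (if a = v then 1 else 0) := by
  rw [Finset.sum_eq_single_of_mem j₀ (Finset.mem_univ _)]
  · have hl := G.loopless j₀
    rcases hj₀ with ⟨h1, h2⟩ | ⟨h1, h2⟩
    · rw [if_pos ⟨h1, h2⟩, if_neg (fun hq => hab ((h1.symm.trans hq.1)))]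
      subst h1; subst h2
      simp only [inc]
      split_ifs <;> simp_all <;> ring
    · rw [if_neg (fun hq => hab (hq.1.symm.trans h1)), if_pos ⟨h1, h2⟩]
      subst h1; subst h2
      simp only [inc]
      split_ifs <;> simp_all <;> ring
  · intro j _ hne
    by_cases hA : G.src j = a ∧ G.tgt j = b
    · exact absurd (edge_unique G (Or.inl hA) hj₀) hne
    by_cases hB : G.src j = b ∧ G.tgt j = a
    · exact absurd (edge_unique G (Or.inr hB) hj₀) hne
    simp [hA, hB]

lemma mulVec_cycVec {m n : ℕ} (G : DiGraph m n) {r : ℕ} {u : ℕ → Fin m}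
    (hc : IsSimpleCycle G r u) : (inc G).mulVec (cycVec G r u) = 0 := by
  obtain ⟨hr3, hinj, hedge⟩ := hc
  funext v
  show ∑ j, inc G v j * cycVec G r u j = 0
  have hswap : ∑ j, inc G v j * cycVec G r u j = ∑ i ∈ Finset.range r, ∑ j : Fin n,
      inc G v j * ((if G.src j = u i ∧ G.tgt j = u ((i + 1) % r) then (1 : ℝ) else 0) -
        (if G.src j = u ((i + 1) % r) ∧ G.tgt j = u i then (1 : ℝ) else 0)) := by
    simp only [cycVec, Finset.mul_sum]
    rw [Finset.sum_comm]
  rw [hswap]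
  have hterm : ∀ i ∈ Finset.range r, (∑ j : Fin n,
      inc G v j * ((if G.src j = u i ∧ G.tgt j = u ((i + 1) % r) then (1 : ℝ) else 0) -
        (if G.src j = u ((i + 1) % r) ∧ G.tgt j = u i then (1 : ℝ) else 0))) =
      (if u ((i + 1) % r) = v then 1 else 0) - (if u i = v then 1 else 0) := by
    intro i hi
    rw [Finset.mem_range] at hi
    have hmod : (i + 1) % r < r := Nat.mod_lt _ (by omega)
    have hne : u i ≠ u ((i + 1) % r) := by
      intro h
      have h2 := hinj i hi ((i + 1) % r) hmod h
      rcases Nat.lt_or_ge (i + 1) r with h3 | h3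
      · rw [Nat.mod_eq_of_lt h3] at h2; omega
      · have h4 : i + 1 = r := by omega
        rw [h4, Nat.mod_self] at h2; omega
    obtain ⟨j₀, hj₀⟩ := hedge i hi
    exact incSum G hne hj₀ v
  rw [Finset.sum_congr rfl hterm, Finset.sum_sub_distrib]
  obtain ⟨r', rfl⟩ : ∃ r', r = r' + 1 := ⟨r - 1, by omega⟩
  rw [Finset.sum_range_succ, Finset.sum_range_succ']
  have h1 : ∀ i ∈ Finset.range r', (if u ((i + 1) % (r' + 1)) = v then (1:ℝ) else 0) =
      (if u (i + 1) = v then 1 else 0) := by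
    intro i hi
    rw [Finset.mem_range] at hi
    rw [Nat.mod_eq_of_lt (by omega)]
  rw [Finset.sum_congr rfl h1, Nat.mod_self]
  ring

lemma rev_key {r : ℕ} (hr : 3 ≤ r) : ∀ i < r, (r - i % r) % r = if i = 0 then 0 else r - i := by
  intro i hi
  rw [Nat.mod_eq_of_lt hi]
  split_ifs with h
  · subst h; simp [Nat.mod_self]
  · exact Nat.mod_eq_of_lt (by omega)

lemma rev_arg1 {r : ℕ} (hr : 3 ≤ r) {i : ℕ} (hi : i < r) :
    (r - i % r) % r = (r - 1 - i + 1) % r := by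
  rw [rev_key hr i hi]
  split_ifs with h
  · subst h; rw [Nat.sub_zero, Nat.sub_add_cancel (by omega), Nat.mod_self]
  · rw [Nat.mod_eq_of_lt (by omega)]; omega

lemma rev_arg2 {r : ℕ} (hr : 3 ≤ r) {i : ℕ} (hi : i < r) :
    (r - ((i + 1) % r) % r) % r = r - 1 - i := by
  rcases Nat.lt_or_ge (i + 1) r with h | h
  · rw [Nat.mod_eq_of_lt h, Nat.mod_eq_of_lt h, Nat.mod_eq_of_lt (by omega)]; omega
  · have h4 : i + 1 = r := by omega
    rw [h4, Nat.mod_self, Nat.zero_mod, Nat.sub_zero, Nat.mod_self]; omega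

lemma rev_cycle {m n : ℕ} {G : DiGraph m n} {r : ℕ} {u : ℕ → Fin m}
    (hc : IsSimpleCycle G r u) : IsSimpleCycle G r (fun i => u ((r - i % r) % r)) := by
  obtain ⟨hr3, hinj, hedge⟩ := hc
  refine ⟨hr3, ?_, ?_⟩
  · intro i hi j hj h
    simp only [rev_key hr3 i hi, rev_key hr3 j hj] at h
    have h1 : (if i = 0 then 0 else r - i) < r := by split_ifs <;> omega
    have h2 : (if j = 0 then 0 else r - j) < r := by split_ifs <;> omega
    have := hinj _ h1 _ h2 h
    split_ifs at this <;> omega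
  · intro i hi
    have hk : r - 1 - i < r := by omega
    obtain ⟨j, hj⟩ := hedge (r - 1 - i) hk
    refine ⟨j, ?_⟩
    simp only [rev_arg1 hr3 hi, rev_arg2 hr3 hi]
    tauto

lemma rev_cycVec {m n : ℕ} (G : DiGraph m n) {r : ℕ} {u : ℕ → Fin m} (hr3 : 3 ≤ r) :
    cycVec G r (fun i => u ((r - i % r) % r)) = -cycVec G r u := by
  funext j
  show _ = -(∑ i ∈ Finset.range r, _)
  rw [← Finset.sum_range_reflect (fun i =>
    ((if G.src j = u i ∧ G.tgt j = u ((i + 1) % r) then (1 : ℝ) else 0) -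
     (if G.src j = u ((i + 1) % r) ∧ G.tgt j = u i then (1 : ℝ) else 0))) r,
    ← Finset.sum_neg_distrib]
  unfold cycVec
  refine Finset.sum_congr rfl ?_
  intro i hi
  rw [Finset.mem_range] at hi
  simp only [rev_arg1 hr3 hi, rev_arg2 hr3 hi]
  have hs : r - 1 - i + 1 ≤ r := by omega
  rw [neg_sub]

lemma deg2 {m n : ℕ} (G : DiGraph m n) {z : Fin n → ℝ} (hAz : (inc G).mulVec z = 0)
    (v : Fin m) {j : Fin n} (hj : z j ≠ 0) (hinc : G.src j = v ∨ G.tgt j = v) :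
    ∃ e, e ≠ j ∧ z e ≠ 0 ∧ (G.src e = v ∨ G.tgt e = v) := by
  by_contra hcon
  push_neg at hcon
  have hv : ∑ e, inc G v e * z e = 0 := by
    have := congrFun hAz v
    simpa [Matrix.mulVec, dotProduct] using this
  rw [Finset.sum_eq_single_of_mem j (Finset.mem_univ _)] at hv
  · have hij : inc G v j ≠ 0 := by
      unfold inc
      rcases hinc with h | h
      · rw [if_neg (by rw [← h]; exact (G.loopless j).symm), if_pos h]; norm_num
      · rw [if_pos h]; norm_num
    exact hij (by rcases mul_eq_zero.mp hv with h | h; exacts [h, absurd h hj])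
  · intro e _ hne
    by_cases hze : z e = 0
    · rw [hze]; ring
    · have := hcon e hne hze
      unfold inc
      rw [if_neg (fun h => this.2 h), if_neg (fun h => this.1 h)]
      ring

noncomputable def nxt {m n : ℕ} (G : DiGraph m n) (z : Fin n → ℝ) (p : Fin n × Fin m) :
    Fin n × Fin m :=
  if h : ∃ e, e ≠ p.1 ∧ z e ≠ 0 ∧ (G.src e = p.2 ∨ G.tgt e = p.2) then
    (h.choose, if G.src h.choose = p.2 then G.tgt h.choose else G.src h.choose)
  else p

noncomputable def wSeq {m n : ℕ} (G : DiGraph m n) (z : Fin n → ℝ) (j0 : Fin n) (k : ℕ) :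
    Fin n × Fin m := (nxt G z)^[k] (j0, G.tgt j0)

noncomputable def eSeq {m n : ℕ} (G : DiGraph m n) (z : Fin n → ℝ) (j0 : Fin n) (k : ℕ) :
    Fin n := (wSeq G z j0 k).1

noncomputable def vSeq {m n : ℕ} (G : DiGraph m n) (z : Fin n → ℝ) (j0 : Fin n) : ℕ → Fin m
  | 0 => G.src j0
  | (k + 1) => (wSeq G z j0 k).2

lemma wSeq_succ {m n : ℕ} (G : DiGraph m n) (z : Fin n → ℝ) (j0 : Fin n) (k : ℕ) :
    wSeq G z j0 (k + 1) = nxt G z (wSeq G z j0 k) := Function.iterate_succ_apply' _ _ _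

lemma walk_step {m n : ℕ} (G : DiGraph m n) {z : Fin n → ℝ} (hAz : (inc G).mulVec z = 0)
    (j0 : Fin n) (k : ℕ)
    (h1 : z (eSeq G z j0 k) ≠ 0)
    (h2 : (G.src (eSeq G z j0 k) = vSeq G z j0 k ∧ G.tgt (eSeq G z j0 k) = vSeq G z j0 (k+1)) ∨
      (G.src (eSeq G z j0 k) = vSeq G z j0 (k+1) ∧ G.tgt (eSeq G z j0 k) = vSeq G z j0 k)) :
    z (eSeq G z j0 (k+1)) ≠ 0 ∧
    ((G.src (eSeq G z j0 (k+1)) = vSeq G z j0 (k+1) ∧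
        G.tgt (eSeq G z j0 (k+1)) = vSeq G z j0 (k+2)) ∨
      (G.src (eSeq G z j0 (k+1)) = vSeq G z j0 (k+2) ∧
        G.tgt (eSeq G z j0 (k+1)) = vSeq G z j0 (k+1))) ∧
    eSeq G z j0 (k+1) ≠ eSeq G z j0 k := by
  have hv1 : vSeq G z j0 (k+1) = (wSeq G z j0 k).2 := rfl
  have hinc : G.src (eSeq G z j0 k) = (wSeq G z j0 k).2 ∨
      G.tgt (eSeq G z j0 k) = (wSeq G z j0 k).2 := by
    rw [← hv1]; tauto
  have hex : ∃ e, e ≠ (wSeq G z j0 k).1 ∧ z e ≠ 0 ∧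
      (G.src e = (wSeq G z j0 k).2 ∨ G.tgt e = (wSeq G z j0 k).2) :=
    deg2 G hAz _ h1 hinc
  have hw : wSeq G z j0 (k+1) = (hex.choose,
      if G.src hex.choose = (wSeq G z j0 k).2 then G.tgt hex.choose else G.src hex.choose) := by
    rw [wSeq_succ]; unfold nxt; rw [dif_pos hex]
  have he : eSeq G z j0 (k+1) = hex.choose := by rw [eSeq, hw]
  obtain ⟨hne, hz, hio⟩ := hex.choose_spec
  have hv2 : vSeq G z j0 (k+2) =
      if G.src hex.choose = (wSeq G z j0 k).2 then G.tgt hex.choose else G.src hex.choose := by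
    show (wSeq G z j0 (k+1)).2 = _
    rw [hw]
  refine ⟨by rw [he]; exact hz, ?_, by rw [he]; exact hne⟩
  rw [he, hv1, hv2]
  by_cases hcase : G.src hex.choose = (wSeq G z j0 k).2
  · rw [if_pos hcase]; exact Or.inl ⟨hcase, rfl⟩
  · rw [if_neg hcase]
    rcases hio with h | h
    · exact absurd h hcase
    · exact Or.inr ⟨rfl, h⟩

lemma walk_inv {m n : ℕ} (G : DiGraph m n) {z : Fin n → ℝ} (hAz : (inc G).mulVec z = 0)
    {j0 : Fin n} (hj0 : z j0 ≠ 0) (k : ℕ) :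
    z (eSeq G z j0 k) ≠ 0 ∧
    ((G.src (eSeq G z j0 k) = vSeq G z j0 k ∧ G.tgt (eSeq G z j0 k) = vSeq G z j0 (k+1)) ∨
      (G.src (eSeq G z j0 k) = vSeq G z j0 (k+1) ∧ G.tgt (eSeq G z j0 k) = vSeq G z j0 k)) := by
  induction k with
  | zero => exact ⟨hj0, Or.inl ⟨rfl, rfl⟩⟩
  | succ k ih =>
      have := walk_step G hAz j0 k ih.1 ih.2
      exact ⟨this.1, this.2.1⟩

lemma walk_enew {m n : ℕ} (G : DiGraph m n) {z : Fin n → ℝ} (hAz : (inc G).mulVec z = 0)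
    {j0 : Fin n} (hj0 : z j0 ≠ 0) (k : ℕ) : eSeq G z j0 (k+1) ≠ eSeq G z j0 k :=
  (walk_step G hAz j0 k (walk_inv G hAz hj0 k).1 (walk_inv G hAz hj0 k).2).2.2

lemma walk_vne {m n : ℕ} (G : DiGraph m n) {z : Fin n → ℝ} (hAz : (inc G).mulVec z = 0)
    {j0 : Fin n} (hj0 : z j0 ≠ 0) (k : ℕ) : vSeq G z j0 k ≠ vSeq G z j0 (k+1) := by
  have h := (walk_inv G hAz hj0 k).2
  have hl := G.loopless (eSeq G z j0 k)
  rcases h with ⟨a, b⟩ | ⟨a, b⟩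
  · rw [← a, ← b]; exact hl
  · rw [← a, ← b]; exact hl.symm

lemma walk_nonback {m n : ℕ} (G : DiGraph m n) {z : Fin n → ℝ} (hAz : (inc G).mulVec z = 0)
    {j0 : Fin n} (hj0 : z j0 ≠ 0) (k : ℕ) : vSeq G z j0 (k+2) ≠ vSeq G z j0 k := by
  intro h
  apply walk_enew G hAz hj0 k
  apply edge_unique G (a := vSeq G z j0 (k+1)) (b := vSeq G z j0 (k+2))
  · exact (walk_inv G hAz hj0 (k+1)).2
  · have h2 := (walk_inv G hAz hj0 k).2
    rw [← h] at h2
    tauto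

lemma exists_cycle_supp {m n : ℕ} (G : DiGraph m n) {z : Fin n → ℝ}
    (hAz : (inc G).mulVec z = 0) {j0 : Fin n} (hj0 : z j0 ≠ 0) :
    ∃ r u, IsSimpleCycle G r u ∧ ∀ j, cycVec G r u j ≠ 0 → z j ≠ 0 := by
  set v := vSeq G z j0 with hv
  set e := eSeq G z j0 with heq
  -- pigeonhole
  have hpig : ∃ x ∈ Finset.range (m + 1), ∃ y ∈ Finset.range (m + 1), x ≠ y ∧ v x = v y :=
    Finset.exists_ne_map_eq_of_card_lt_of_maps_to (t := (Finset.univ : Finset (Fin m)))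
      (by simp) (fun a _ => Finset.mem_univ (v a))
  have hB : ∃ b, ∃ a, a < b ∧ v a = v b := by
    obtain ⟨x, _, y, _, hxy, hv⟩ := hpig
    rcases Nat.lt_or_ge x y with h | h
    · exact ⟨y, x, h, hv⟩
    · exact ⟨x, y, by omega, hv.symm⟩
  classical
  set b := Nat.find hB with hbdef
  obtain ⟨a, hab, hvab⟩ := Nat.find_spec hB
  rw [← hbdef] at hab hvab
  have hmin : ∀ i j, i < j → j < b → v i ≠ v j := by
    intro i j hij hjb hvv
    exact Nat.find_min hB hjb ⟨i, hij, hvv⟩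
  set r := b - a with hrdef
  set u : ℕ → Fin m := fun i => v (a + i) with hudef
  have hba : b = a + r := by omega
  -- r ≥ 3
  have hr1 : r ≠ 1 := by
    intro h
    exact walk_vne G hAz hj0 a (by rw [← hv]; rw [hba, h] at hvab; exact hvab)
  have hr2 : r ≠ 2 := by
    intro h
    exact walk_nonback G hAz hj0 a (by rw [← hv]; rw [hba, h] at hvab; exact hvab.symm)
  have hr3 : 3 ≤ r := by omega
  have hinj : ∀ i < r, ∀ k < r, u i = u k → i = k := by
    intro i hi k hk h
    rcases lt_trichotomy i k with hc | hc | hc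
    · exact absurd h (hmin (a + i) (a + k) (by omega) (by omega))
    · exact hc
    · exact absurd h.symm (hmin (a + k) (a + i) (by omega) (by omega))
  have hu : ∀ i < r, u ((i + 1) % r) = v (a + i + 1) := by
    intro i hi
    rcases Nat.lt_or_ge (i + 1) r with h | h
    · rw [Nat.mod_eq_of_lt h]; rfl
    · have h4 : i + 1 = r := by omega
      rw [h4, Nat.mod_self, hudef]
      show v (a + 0) = v (a + i + 1)
      rw [Nat.add_zero, hvab]; congr 1; omega
  have hori : ∀ k, (G.src (e k) = v k ∧ G.tgt (e k) = v (k+1)) ∨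
      (G.src (e k) = v (k+1) ∧ G.tgt (e k) = v k) := fun k => (walk_inv G hAz hj0 k).2
  have hez : ∀ k, z (e k) ≠ 0 := fun k => (walk_inv G hAz hj0 k).1
  refine ⟨r, u, ⟨hr3, hinj, ?_⟩, ?_⟩
  · intro i hi
    refine ⟨e (a + i), ?_⟩
    rw [hu i hi]
    have := hori (a + i)
    have hua : u i = v (a + i) := rfl
    rw [hua]
    tauto
  · intro j hcv
    have : ∃ i ∈ Finset.range r,
        ((if G.src j = u i ∧ G.tgt j = u ((i + 1) % r) then (1 : ℝ) else 0) -
         (if G.src j = u ((i + 1) % r) ∧ G.tgt j = u i then (1 : ℝ) else 0)) ≠ 0 :=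
      Finset.exists_ne_zero_of_sum_ne_zero hcv
    obtain ⟨i, hi, hterm⟩ := this
    rw [Finset.mem_range] at hi
    have hor := term_cases G hterm
    rw [hu i hi] at hor
    have hua : u i = v (a + i) := rfl
    rw [hua] at hor
    have : j = e (a + i) := by
      apply edge_unique G (a := v (a + i)) (b := v (a + i + 1)) hor
      exact hori (a + i)
    rw [this]
    exact hez (a + i)

theorem stmt11 {m n : ℕ} (G : DiGraph m n) (hconn : (toSG G).Connected)
    (hcyc : ∃ r u, IsSimpleCycle G r u) :
    ∀ z ∈ Set.extremePoints ℝ {x : Fin n → ℝ | (inc G).mulVec x = 0 ∧ l1 x ≤ 1},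
      z ∈ W1 G := by
  classical
  intro z hz
  have hAz : (inc G).mulVec z = 0 := hz.1.1
  have hl1le : l1 z ≤ 1 := hz.1.2
  have hext := hz.2
  -- Step A : l1 z = 1
  have hl1 : l1 z = 1 := by
    rcases eq_or_lt_of_le hl1le with h | hlt
    · exact h
    exfalso
    obtain ⟨r0, u0, hc0⟩ := hcyc
    have hr30 : 3 ≤ r0 := hc0.1
    have hw0A := mulVec_cycVec G hc0
    obtain ⟨j0, hj0⟩ := hc0.2.2 0 (by omega)
    rw [show (0 + 1) % r0 = 1 from Nat.mod_eq_of_lt (by omega)] at hj0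
    have hw0 : cycVec G r0 u0 j0 ≠ 0 := cycVec_ne G hc0 hj0
    set w0 := cycVec G r0 u0 with hw0def
    have hL : 0 < l1 w0 := lt_of_lt_of_le (abs_pos.mpr hw0)
      (Finset.single_le_sum (f := fun j => |w0 j|) (fun i _ => abs_nonneg _) (Finset.mem_univ j0))
    set ε := (1 - l1 z) / l1 w0 with hεdef
    have hεpos : 0 < ε := div_pos (by linarith) hL
    have hmem : ∀ t : ℝ, |t| ≤ ε →
        ((inc G).mulVec (z + t • w0) = 0 ∧ l1 (z + t • w0) ≤ 1) := by
      intro t ht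
      refine ⟨by rw [Matrix.mulVec_add, Matrix.mulVec_smul, hAz, hw0A]; simp, ?_⟩
      have hb : l1 (z + t • w0) ≤ l1 z + ε * l1 w0 := by
        show ∑ j, |(z + t • w0) j| ≤ l1 z + ε * l1 w0
        calc ∑ j, |(z + t • w0) j| ≤ ∑ j, (|z j| + ε * |w0 j|) :=
              Finset.sum_le_sum (fun j _ => by
                have h1 : (z + t • w0) j = z j + t * w0 j := by
                  simp [Pi.add_apply, Pi.smul_apply, smul_eq_mul]
                rw [h1]
                have h2 : |z j + t * w0 j| ≤ |z j| + |t| * |w0 j| := by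
                  rw [← abs_mul]; exact abs_add_le _ _
                have h3 : |t| * |w0 j| ≤ ε * |w0 j| :=
                  mul_le_mul_of_nonneg_right ht (abs_nonneg _)
                linarith)
          _ = l1 z + ε * l1 w0 := by
              rw [Finset.sum_add_distrib, ← Finset.mul_sum]; rfl
      have hc : ε * l1 w0 = 1 - l1 z := div_mul_cancel₀ _ (ne_of_gt hL)
      linarith
    have h1 := hmem ε (le_of_eq (abs_of_pos hεpos))
    have h2 := hmem (-ε) (le_of_eq (by rw [abs_neg]; exact abs_of_pos hεpos))
    have hseg : z ∈ openSegment ℝ (z + ε • w0) (z + (-ε) • w0) :=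
      ⟨1/2, 1/2, by norm_num, by norm_num, by norm_num, by module⟩
    have heq0 : z + ε • w0 = z := (hext h1 h2 hseg)
    have hsm : ε • w0 = 0 := by
      have := congrArg (fun x => x - z) heq0
      simpa using this
    have : w0 = 0 := (smul_eq_zero.mp hsm).resolve_left (ne_of_gt hεpos)
    exact hw0 (by rw [this]; rfl)
  -- Step B : find a cycle in the support of z
  have hzne : ∃ j, z j ≠ 0 := by
    by_contra hcn
    push_neg at hcn
    have h0 : l1 z = 0 := by unfold l1; simp [hcn]
    linarith
  obtain ⟨jz, hjz⟩ := hzne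
  obtain ⟨r, u, hc, hsupp⟩ := exists_cycle_supp G hAz hjz
  -- Step C : extreme point must be proportional to the cycle vector
  set w := cycVec G r u with hwdef
  have hwA := mulVec_cycVec G hc
  have hw0 : ∀ j, z j = 0 → w j = 0 := fun j hj => by
    by_contra hwj; exact (hsupp j hwj) hj
  set σ : Fin n → ℝ := fun j => if 0 < z j then 1 else -1 with hσdef
  have hσz : ∀ j, σ j * z j = |z j| := by
    intro j
    by_cases h : 0 < z j
    · simp [hσdef, h, abs_of_pos h]
    · simp only [hσdef, if_neg h]
      rw [abs_of_nonpos (not_lt.mp h)]; ring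
  have hσ1 : ∀ j, σ j = 1 ∨ σ j = -1 := fun j => by
    by_cases h : 0 < z j
    · left; simp [hσdef, h]
    · right; simp [hσdef, h]
  set s := ∑ j, σ j * w j with hsdef
  set d := w - s • z with hddef
  have hdapp : ∀ j, d j = w j - s * z j := fun j => by
    rw [hddef]; simp [Pi.sub_apply, Pi.smul_apply, smul_eq_mul]
  have hdA : (inc G).mulVec d = 0 := by
    rw [hddef, Matrix.mulVec_sub, Matrix.mulVec_smul, hAz, hwA]; simp
  have hd0 : ∀ j, z j = 0 → d j = 0 := fun j hj => by
    rw [hdapp j, hw0 j hj, hj]; ring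
  set K := ∑ j, |d j| with hKdef
  have hK0 : 0 ≤ K := Finset.sum_nonneg fun j _ => abs_nonneg _
  have hKb : ∀ j, |d j| ≤ K := fun j => by
    rw [hKdef]
    exact Finset.single_le_sum (f := fun i => |d i|) (fun i _ => abs_nonneg _) (Finset.mem_univ j)
  set T := Finset.univ.filter (fun j => z j ≠ 0) with hTdef
  have hTne : T.Nonempty := ⟨jz, by simp [hTdef, hjz]⟩
  set δ := T.inf' hTne (fun j => |z j|) with hδdef
  have hδpos : 0 < δ := by
    rw [hδdef, Finset.lt_inf'_iff]
    intro j hj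
    rw [hTdef, Finset.mem_filter] at hj
    exact abs_pos.mpr hj.2
  have hδle : ∀ j, z j ≠ 0 → δ ≤ |z j| :=
    fun j hj => Finset.inf'_le _ (by simp [hTdef, hj])
  set ε := δ / (K + 1) with hεdef
  have hεpos : 0 < ε := div_pos hδpos (by linarith)
  have hsmall : ∀ t : ℝ, |t| ≤ ε → ∀ j, z j ≠ 0 → |t * d j| < |z j| := by
    intro t ht j hj
    have h1 : |t * d j| ≤ ε * K := by
      rw [abs_mul]; exact mul_le_mul ht (hKb j) (abs_nonneg _) (le_of_lt hεpos)
    have h2 : ε * K < δ := by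
      rw [hεdef, div_mul_eq_mul_div, div_lt_iff₀ (by linarith)]; nlinarith
    exact (h1.trans_lt h2).trans_le (hδle j hj)
  have habs : ∀ t : ℝ, |t| ≤ ε → ∀ j, |z j + t * d j| = σ j * (z j + t * d j) := by
    intro t ht j
    by_cases hj : z j = 0
    · rw [hj, hd0 j hj]; simp
    · have hlt := hsmall t ht j hj
      have hσabs : |σ j| = 1 := by rcases hσ1 j with h | h <;> simp [h]
      have key : 0 < σ j * (z j + t * d j) := by
        have e1 : σ j * (z j + t * d j) = |z j| + σ j * (t * d j) := by
          rw [mul_add, hσz j]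
        have h2 : |σ j * (t * d j)| = |t * d j| := by rw [abs_mul, hσabs, one_mul]
        have h3 : -|t * d j| ≤ σ j * (t * d j) := by rw [← h2]; exact neg_abs_le _
        have h4 : 0 < |z j| := abs_pos.mpr hj
        nlinarith
      rcases hσ1 j with h | h
      · rw [h, one_mul]
        rw [h, one_mul] at key
        exact abs_of_pos key
      · have hx : z j + t * d j < 0 := by rw [h] at key; linarith
        rw [abs_of_neg hx, h]; ring
  have hσzsum : ∑ j, σ j * z j = 1 := by
    rw [Finset.sum_congr rfl (fun j _ => hσz j)]
    exact hl1
  have hl1t : ∀ t : ℝ, |t| ≤ ε → l1 (z + t • d) = 1 := by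
    intro t ht
    show ∑ j, |(z + t • d) j| = 1
    have hterm : ∀ j, |(z + t • d) j| = σ j * z j + t * (σ j * d j) := by
      intro j
      have h1 : (z + t • d) j = z j + t * d j := by
        simp [Pi.add_apply, Pi.smul_apply, smul_eq_mul]
      rw [h1, habs t ht j]; ring
    rw [Finset.sum_congr rfl (fun j _ => hterm j), Finset.sum_add_distrib, ← Finset.mul_sum]
    have e2 : ∑ j, σ j * d j = 0 := by
      have h3 : ∀ j, σ j * d j = σ j * w j - s * (σ j * z j) := fun j => by
        rw [hdapp j]; ring
      rw [Finset.sum_congr rfl (fun j _ => h3 j), Finset.sum_sub_distrib, ← Finset.mul_sum,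
        hσzsum, ← hsdef]
      ring
    rw [hσzsum, e2]; ring
  have hmem : ∀ t : ℝ, |t| ≤ ε →
      ((inc G).mulVec (z + t • d) = 0 ∧ l1 (z + t • d) ≤ 1) :=
    fun t ht => ⟨by rw [Matrix.mulVec_add, Matrix.mulVec_smul, hAz, hdA]; simp,
      le_of_eq (hl1t t ht)⟩
  have h1 := hmem ε (le_of_eq (abs_of_pos hεpos))
  have h2 := hmem (-ε) (le_of_eq (by rw [abs_neg]; exact abs_of_pos hεpos))
  have hseg : z ∈ openSegment ℝ (z + ε • d) (z + (-ε) • d) :=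
    ⟨1/2, 1/2, by norm_num, by norm_num, by norm_num, by module⟩
  have hd_eq : z + ε • d = z := (hext h1 h2 hseg)
  have hdz : d = 0 := by
    have hsm : ε • d = 0 := by
      have := congrArg (fun x => x - z) hd_eq
      simpa using this
    exact (smul_eq_zero.mp hsm).resolve_left (ne_of_gt hεpos)
  have hws : w = s • z := by
    have := hdz
    rw [hddef, sub_eq_zero] at this
    exact this
  have hr3 : 3 ≤ r := hc.1
  obtain ⟨je, hje⟩ := hc.2.2 0 (by omega)
  rw [show (0 + 1) % r = 1 from Nat.mod_eq_of_lt (by omega)] at hje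
  have hwne : w je ≠ 0 := cycVec_ne G hc hje
  have hs : s ≠ 0 := by
    intro h
    apply hwne
    rw [hws, h]; simp
  have hl1w : l1 w = |s| := by
    show ∑ j, |w j| = |s|
    have h1 : ∀ j, |w j| = |s| * |z j| := fun j => by
      rw [hws]; simp [Pi.smul_apply, smul_eq_mul, abs_mul]
    rw [Finset.sum_congr rfl (fun j _ => h1 j), ← Finset.mul_sum]
    have h2 : ∑ j, |z j| = 1 := hl1
    rw [h2, mul_one]
  rcases hs.lt_or_gt with hneg | hpos
  · refine ⟨r, (fun i => u ((r - i % r) % r)), rev_cycle hc, ?_⟩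
    rw [rev_cycVec G hr3, ← hwdef]
    have hl1neg : l1 (-w) = |s| := by
      show ∑ j, |(-w) j| = |s|
      calc ∑ j, |(-w) j| = ∑ j, |w j| := by
            refine Finset.sum_congr rfl fun j _ => ?_
            rw [Pi.neg_apply, abs_neg]
        _ = |s| := hl1w
    rw [hl1neg, abs_of_neg hneg, hws, ← neg_smul, smul_smul,
      inv_mul_cancel₀ (neg_ne_zero.mpr hs), one_smul]
  · refine ⟨r, u, hc, ?_⟩
    rw [← hwdef, hl1w, abs_of_pos hpos, hws, smul_smul, inv_mul_cancel₀ (ne_of_gt hpos), one_smul]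
end

section
/- Let A be the incidence matrix of a simple, connected directed graph G with girth g. Every s-sparse vector x̄ ∈ R^n is the unique minimizer of ‖x‖₁ subject to Ax = Ax̄ if and only if s < g/2. -/
open Finset

set_option linter.unusedVariables false

namespace Aux

lemma pair_eq' {α : Type*} [DecidableEq α] {a b c d : α} (hab : a ≠ b)
    (h : ({a,b} : Finset α) = {c,d}) : (a = c ∧ b = d) ∨ (a = d ∧ b = c) := by
  have ha : a ∈ ({c,d} : Finset α) := h ▸ by simp
  have hb : b ∈ ({c,d} : Finset α) := h ▸ by simp
  simp only [Finset.mem_insert, Finset.mem_singleton] at ha hb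
  rcases ha with ha | ha <;> rcases hb with hb | hb <;> simp_all

variable {m n : ℕ} {G : DiGraph m n} {r : ℕ} {u : ℕ → Fin m}

/-- successor index facts -/
lemma succ_mod (hr : 3 ≤ r) {i : ℕ} (hi : i < r) :
    ((i+1)%r = i+1 ∧ i+1 < r) ∨ (i = r-1 ∧ (i+1)%r = 0) := by
  rcases Nat.lt_or_ge (i+1) r with h | h
  · exact Or.inl ⟨Nat.mod_eq_of_lt h, h⟩
  · right
    have h1 : i = r - 1 := by omega
    have h2 : i + 1 = r := by omega
    exact ⟨h1, by simp [h2]⟩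

lemma succ_ne (hr : 3 ≤ r) {i : ℕ} (hi : i < r) : (i + 1) % r ≠ i := by
  rcases succ_mod hr hi with ⟨h1, _⟩ | ⟨h1, h2⟩ <;> omega

lemma succ_lt (hr : 3 ≤ r) (i : ℕ) : (i + 1) % r < r := Nat.mod_lt _ (by omega)

lemma step_inj (hc : IsSimpleCycle G r u) {i i' : ℕ} (hi : i < r) (hi' : i' < r)
    (h : (u i = u i' ∧ u ((i+1)%r) = u ((i'+1)%r)) ∨
         (u i = u ((i'+1)%r) ∧ u ((i+1)%r) = u i')) : i = i' := by
  obtain ⟨hr, hinj, hstep⟩ := hc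
  rcases h with ⟨h1, h2⟩ | ⟨h1, h2⟩
  · exact hinj i hi i' hi' h1
  · have e1 : i = (i'+1) % r := hinj i hi _ (succ_lt hr i') h1
    have e2 : (i+1) % r = i' := hinj _ (succ_lt hr i) i' hi' h2
    rcases succ_mod hr hi with ⟨f1, f2⟩ | ⟨f1, f2⟩ <;>
      rcases succ_mod hr hi' with ⟨e3, e4⟩ | ⟨e3, e4⟩ <;> omega

/-- distinct endpoints of a step -/
lemma step_ne (hc : IsSimpleCycle G r u) {i : ℕ} (hi : i < r) : u i ≠ u ((i+1)%r) := by
  obtain ⟨hr, hinj, hstep⟩ := hc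
  intro h
  exact succ_ne hr hi (hinj _ (succ_lt hr i) i hi h.symm)


lemma idx_unique (hc : IsSimpleCycle G r u) {j : Fin n} {i i' : ℕ} (hi : i < r) (hi' : i' < r)
    (h : (G.src j = u i ∧ G.tgt j = u ((i+1)%r)) ∨ (G.src j = u ((i+1)%r) ∧ G.tgt j = u i))
    (h' : (G.src j = u i' ∧ G.tgt j = u ((i'+1)%r)) ∨ (G.src j = u ((i'+1)%r) ∧ G.tgt j = u i')) :
    i = i' := by
  apply step_inj hc hi hi'
  rcases h with ⟨h1,h2⟩|⟨h1,h2⟩ <;> rcases h' with ⟨g1,g2⟩|⟨g1,g2⟩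
  · exact Or.inl ⟨h1.symm.trans g1, h2.symm.trans g2⟩
  · exact Or.inr ⟨h1.symm.trans g1, h2.symm.trans g2⟩
  · exact Or.inr ⟨h2.symm.trans g2, h1.symm.trans g1⟩
  · exact Or.inl ⟨h2.symm.trans g2, h1.symm.trans g1⟩

lemma edge_unique {j j' : Fin n} {i : ℕ}
    (h : (G.src j = u i ∧ G.tgt j = u ((i+1)%r)) ∨ (G.src j = u ((i+1)%r) ∧ G.tgt j = u i))
    (h' : (G.src j' = u i ∧ G.tgt j' = u ((i+1)%r)) ∨ (G.src j' = u ((i+1)%r) ∧ G.tgt j' = u i)) :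
    j = j' := by
  apply G.simple
  rcases h with ⟨h1,h2⟩|⟨h1,h2⟩ <;> rcases h' with ⟨g1,g2⟩|⟨g1,g2⟩ <;> rw [h1,h2,g1,g2]
  · exact Finset.pair_comm _ _
  · exact Finset.pair_comm _ _

lemma not_both (hc : IsSimpleCycle G r u) {j : Fin n} {i : ℕ} (hi : i < r)
    (h : G.src j = u i ∧ G.tgt j = u ((i+1)%r)) :
    ¬(G.src j = u ((i+1)%r) ∧ G.tgt j = u i) := by
  rintro ⟨g1, g2⟩
  exact step_ne hc hi (h.1.symm.trans g1)

lemma cycVec_spec (hc : IsSimpleCycle G r u) (j : Fin n) :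
    (cycVec G r u j = 0 ∧ ∀ i < r,
      ¬((G.src j = u i ∧ G.tgt j = u ((i+1)%r)) ∨ (G.src j = u ((i+1)%r) ∧ G.tgt j = u i))) ∨
    ∃ i < r, ((G.src j = u i ∧ G.tgt j = u ((i+1)%r)) ∧ cycVec G r u j = 1) ∨
             ((G.src j = u ((i+1)%r) ∧ G.tgt j = u i) ∧ cycVec G r u j = -1) := by
  by_cases hex : ∃ i, i < r ∧
      ((G.src j = u i ∧ G.tgt j = u ((i+1)%r)) ∨ (G.src j = u ((i+1)%r) ∧ G.tgt j = u i))
  · obtain ⟨i, hi, hST⟩ := hex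
    right
    have hval : cycVec G r u j =
        ((if G.src j = u i ∧ G.tgt j = u ((i + 1) % r) then (1 : ℝ) else 0) -
         (if G.src j = u ((i + 1) % r) ∧ G.tgt j = u i then (1 : ℝ) else 0)) := by
      apply Finset.sum_eq_single_of_mem i (Finset.mem_range.2 hi)
      intro i' hi' hne
      have hz1 : ¬(G.src j = u i' ∧ G.tgt j = u ((i' + 1) % r)) := fun h =>
        hne (idx_unique hc (Finset.mem_range.1 hi') hi (Or.inl h) hST)
      have hz2 : ¬(G.src j = u ((i' + 1) % r) ∧ G.tgt j = u i') := fun h =>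
        hne (idx_unique hc (Finset.mem_range.1 hi') hi (Or.inr h) hST)
      rw [if_neg hz1, if_neg hz2]; ring
    refine ⟨i, hi, ?_⟩
    rcases hST with hS | hT
    · left
      refine ⟨hS, ?_⟩
      rw [hval, if_pos hS, if_neg (not_both hc hi hS)]; ring
    · right
      refine ⟨hT, ?_⟩
      have hS' : ¬(G.src j = u i ∧ G.tgt j = u ((i+1)%r)) := fun h => not_both hc hi h hT
      rw [hval, if_neg hS', if_pos hT]; ring
  · left
    push_neg at hex
    constructor
    · apply Finset.sum_eq_zero
      intro i hi
      have := hex i (Finset.mem_range.1 hi)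
      rw [if_neg (fun h => this.1 h.1 h.2), if_neg (fun h => this.2 h.1 h.2)]; ring
    · exact fun i hi h => h.elim (fun h' => (hex i hi).1 h'.1 h'.2)
        (fun h' => (hex i hi).2 h'.1 h'.2)

lemma cycVec_vals (hc : IsSimpleCycle G r u) (j : Fin n) :
    cycVec G r u j = 0 ∨ cycVec G r u j = 1 ∨ cycVec G r u j = -1 := by
  rcases cycVec_spec hc j with ⟨h, -⟩ | ⟨i, hi, ⟨-, h⟩ | ⟨-, h⟩⟩
  · exact Or.inl h
  · exact Or.inr (Or.inl h)
  · exact Or.inr (Or.inr h)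

lemma abs_cycVec (hc : IsSimpleCycle G r u) (j : Fin n) :
    |cycVec G r u j| = ∑ i ∈ Finset.range r,
      (if (G.src j = u i ∧ G.tgt j = u ((i+1)%r)) ∨ (G.src j = u ((i+1)%r) ∧ G.tgt j = u i)
       then (1:ℝ) else 0) := by
  rcases cycVec_spec hc j with ⟨h, hall⟩ | ⟨i, hi, hcase⟩
  · rw [h, abs_zero]
    symm
    apply Finset.sum_eq_zero
    intro i hi
    exact if_neg (hall i (Finset.mem_range.1 hi))
  · have hST : (G.src j = u i ∧ G.tgt j = u ((i+1)%r)) ∨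
        (G.src j = u ((i+1)%r) ∧ G.tgt j = u i) := by
      rcases hcase with ⟨h, -⟩ | ⟨h, -⟩
      · exact Or.inl h
      · exact Or.inr h
    have : ∑ i' ∈ Finset.range r,
        (if (G.src j = u i' ∧ G.tgt j = u ((i'+1)%r)) ∨ (G.src j = u ((i'+1)%r) ∧ G.tgt j = u i')
         then (1:ℝ) else 0) = 1 := by
      rw [Finset.sum_eq_single_of_mem i (Finset.mem_range.2 hi)]
      · exact if_pos hST
      · intro i' hi' hne
        exact if_neg (fun h => hne (idx_unique hc (Finset.mem_range.1 hi') hi h hST))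
    rw [this]
    rcases hcase with ⟨-, h⟩ | ⟨-, h⟩ <;> rw [h] <;> norm_num

lemma l1_cycVec (hc : IsSimpleCycle G r u) : l1 (cycVec G r u) = r := by
  unfold l1
  have : ∀ j : Fin n, |cycVec G r u j| = ∑ i ∈ Finset.range r,
      (if (G.src j = u i ∧ G.tgt j = u ((i+1)%r)) ∨ (G.src j = u ((i+1)%r) ∧ G.tgt j = u i)
       then (1:ℝ) else 0) := abs_cycVec hc
  rw [Finset.sum_congr rfl (fun j _ => this j), Finset.sum_comm]
  have : ∀ i ∈ Finset.range r, ∑ j : Fin n,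
      (if (G.src j = u i ∧ G.tgt j = u ((i+1)%r)) ∨ (G.src j = u ((i+1)%r) ∧ G.tgt j = u i)
       then (1:ℝ) else 0) = 1 := by
    intro i hi
    obtain ⟨j0, hj0⟩ := hc.2.2 i (Finset.mem_range.1 hi)
    rw [Finset.sum_eq_single_of_mem j0 (Finset.mem_univ j0)]
    · exact if_pos hj0
    · intro j' _ hne
      exact if_neg (fun h => hne (edge_unique h hj0))
  rw [Finset.sum_congr rfl this]
  simp

lemma l0_cycVec (hc : IsSimpleCycle G r u) : l0 (cycVec G r u) = r := by
  have key : (l0 (cycVec G r u) : ℝ) = l1 (cycVec G r u) := by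
    unfold l0 l1
    rw [Finset.card_filter]
    push_cast
    apply Finset.sum_congr rfl
    intro j _
    rcases cycVec_vals hc j with h | h | h <;> rw [h] <;> norm_num
  have := key.trans (l1_cycVec hc)
  exact_mod_cast this


lemma mod_cycle_sum (hr : 3 ≤ r) (f : ℕ → ℝ) :
    ∑ i ∈ Finset.range r, f ((i+1)%r) = ∑ i ∈ Finset.range r, f i := by
  apply Finset.sum_nbij' (fun i => (i+1)%r) (fun i => (i+(r-1))%r)
  · intro a ha
    exact Finset.mem_range.2 (succ_lt hr a)
  · intro a ha
    exact Finset.mem_range.2 (Nat.mod_lt _ (by omega))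
  · intro a ha
    have ha' := Finset.mem_range.1 ha
    have h1 : ((a+1)%r + (r-1)) % r = ((a+1) + (r-1)) % r :=
      (Nat.ModEq.add_right (r-1) (Nat.mod_modEq (a+1) r))
    have h2 : (a+1) + (r-1) = a + r := by omega
    simp only [h1, h2, Nat.add_mod_right]
    exact Nat.mod_eq_of_lt ha'
  · intro a ha
    have ha' := Finset.mem_range.1 ha
    have h1 : ((a+(r-1))%r + 1) % r = ((a+(r-1)) + 1) % r :=
      (Nat.ModEq.add_right 1 (Nat.mod_modEq (a+(r-1)) r))
    have h2 : (a+(r-1)) + 1 = a + r := by omega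
    simp only [h1, h2, Nat.add_mod_right]
    exact Nat.mod_eq_of_lt ha'
  · intro a ha
    rfl

lemma mulVec_cycVec (hc : IsSimpleCycle G r u) : (inc G).mulVec (cycVec G r u) = 0 := by
  obtain ⟨hr, hinj, hstep⟩ := hc
  funext v
  simp only [Matrix.mulVec, dotProduct, Pi.zero_apply, cycVec]
  have hrw : ∀ j : Fin n, (inc G v j) * (∑ i ∈ Finset.range r,
      ((if G.src j = u i ∧ G.tgt j = u ((i + 1) % r) then (1 : ℝ) else 0) -
       (if G.src j = u ((i + 1) % r) ∧ G.tgt j = u i then (1 : ℝ) else 0))) =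
      ∑ i ∈ Finset.range r, (inc G v j) *
      ((if G.src j = u i ∧ G.tgt j = u ((i + 1) % r) then (1 : ℝ) else 0) -
       (if G.src j = u ((i + 1) % r) ∧ G.tgt j = u i then (1 : ℝ) else 0)) :=
    fun j => Finset.mul_sum _ _ _
  rw [Finset.sum_congr rfl (fun j _ => hrw j), Finset.sum_comm]
  have hinner : ∀ i ∈ Finset.range r, (∑ j : Fin n, (inc G v j) *
      ((if G.src j = u i ∧ G.tgt j = u ((i + 1) % r) then (1 : ℝ) else 0) -
       (if G.src j = u ((i + 1) % r) ∧ G.tgt j = u i then (1 : ℝ) else 0))) =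
      (if u ((i+1)%r) = v then (1:ℝ) else 0) - (if u i = v then (1:ℝ) else 0) := by
    intro i hi
    have hi' := Finset.mem_range.1 hi
    obtain ⟨j0, hj0⟩ := hstep i hi'
    rw [Finset.sum_eq_single_of_mem j0 (Finset.mem_univ j0)]
    · have hne := step_ne ⟨hr, hinj, hstep⟩ hi'
      rcases hj0 with ⟨h1, h2⟩ | ⟨h1, h2⟩
      · have hA : (if G.src j0 = u i ∧ G.tgt j0 = u ((i + 1) % r) then (1:ℝ) else 0) = 1 :=
          if_pos ⟨h1, h2⟩
        have hB : (if G.src j0 = u ((i + 1) % r) ∧ G.tgt j0 = u i then (1:ℝ) else 0) = 0 :=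
          if_neg (fun h => hne (h1.symm.trans h.1))
        rw [hA, hB]
        unfold inc
        rw [h1, h2]
        by_cases e1 : u ((i+1)%r) = v <;> by_cases e2 : u i = v
        · exact absurd (e2.trans e1.symm) hne
        · simp [e1, e2]
        · simp [e1, e2]
        · simp [e1, e2]
      · have hA : (if G.src j0 = u i ∧ G.tgt j0 = u ((i + 1) % r) then (1:ℝ) else 0) = 0 :=
          if_neg (fun h => hne (h.1.symm.trans h1))
        have hB : (if G.src j0 = u ((i + 1) % r) ∧ G.tgt j0 = u i then (1:ℝ) else 0) = 1 :=
          if_pos ⟨h1, h2⟩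
        rw [hA, hB]
        unfold inc
        rw [h1, h2]
        by_cases e1 : u ((i+1)%r) = v <;> by_cases e2 : u i = v
        · exact absurd (e2.trans e1.symm) hne
        · simp [e1, e2]
        · simp [e1, e2]
        · simp [e1, e2]
    · intro j' _ hne
      have z1 : ¬(G.src j' = u i ∧ G.tgt j' = u ((i+1)%r)) :=
        fun h => hne (edge_unique (Or.inl h) hj0)
      have z2 : ¬(G.src j' = u ((i+1)%r) ∧ G.tgt j' = u i) :=
        fun h => hne (edge_unique (Or.inr h) hj0)
      rw [if_neg z1, if_neg z2]; ring
  rw [Finset.sum_congr rfl hinner, Finset.sum_sub_distrib,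
    mod_cycle_sum hr (fun k => if u k = v then (1:ℝ) else 0), sub_self]


def Flow (G : DiGraph m n) (η : Fin n → ℝ) (v w : Fin m) : Prop :=
  ∃ j, (G.src j = v ∧ G.tgt j = w ∧ 0 < η j) ∨ (G.src j = w ∧ G.tgt j = v ∧ η j < 0)

lemma flow_out {η : Fin n → ℝ} (hker : (inc G).mulVec η = 0) {p v : Fin m}
    (hin : Flow G η p v) : ∃ w, Flow G η v w := by
  by_contra hout
  push_neg at hout
  have hv : ∑ j : Fin n, inc G v j * η j = 0 := by
    have := congrFun hker v
    simpa [Matrix.mulVec, dotProduct] using this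
  have hnonneg : ∀ j : Fin n, 0 ≤ inc G v j * η j := by
    intro j
    unfold inc
    by_cases h1 : G.tgt j = v
    · rw [if_pos h1]
      rcases le_or_gt 0 (η j) with h | h
      · simpa using h
      · exact absurd ⟨j, Or.inr ⟨rfl, h1, h⟩⟩ (hout (G.src j))
    · rw [if_neg h1]
      by_cases h2 : G.src j = v
      · rw [if_pos h2]
        rcases le_or_gt (η j) 0 with h | h
        · nlinarith
        · exact absurd ⟨j, Or.inl ⟨h2, rfl, h⟩⟩ (hout (G.tgt j))
      · simp [if_neg h2]
  have hzero : ∀ j : Fin n, inc G v j * η j = 0 := by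
    intro j
    have := (Finset.sum_eq_zero_iff_of_nonneg (fun j _ => hnonneg j)).1 hv j (Finset.mem_univ j)
    exact this
  obtain ⟨j0, hj0⟩ := hin
  rcases hj0 with ⟨h1, h2, h3⟩ | ⟨h1, h2, h3⟩
  · have : inc G v j0 * η j0 = η j0 := by unfold inc; rw [if_pos h2]; ring
    rw [hzero j0] at this
    linarith
  · have hne : G.tgt j0 ≠ v := by
      rw [h2]
      intro h
      exact G.loopless j0 (h1.trans (h2.trans h).symm)
    have : inc G v j0 * η j0 = -η j0 := by unfold inc; rw [if_neg hne, if_pos h1]; ring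
    rw [hzero j0] at this
    linarith

lemma exists_signed_cycle {η : Fin n → ℝ} (hker : (inc G).mulVec η = 0) (hne : η ≠ 0) :
    ∃ r u, IsSimpleCycle G r u ∧ ∀ i < r, ∃ j,
      (G.src j = u i ∧ G.tgt j = u ((i+1)%r) ∧ 0 < η j) ∨
      (G.src j = u ((i+1)%r) ∧ G.tgt j = u i ∧ η j < 0) := by
  -- a starting vertex with outgoing flow
  have hstart : ∃ v : Fin m, ∃ w, Flow G η v w := by
    obtain ⟨j0, hj0⟩ := Function.ne_iff.1 hne
    rcases lt_trichotomy (η j0) 0 with h | h | h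
    · exact ⟨G.tgt j0, G.src j0, j0, Or.inr ⟨rfl, rfl, h⟩⟩
    · exact absurd h hj0
    · exact ⟨G.src j0, G.tgt j0, j0, Or.inl ⟨rfl, rfl, h⟩⟩
  obtain ⟨v0, h0⟩ := hstart
  -- the walk along positive flow
  let f : {v : Fin m // ∃ w, Flow G η v w} → {v : Fin m // ∃ w, Flow G η v w} :=
    fun p => ⟨Classical.choose p.2, flow_out hker (Classical.choose_spec p.2)⟩
  let seq : ℕ → {v : Fin m // ∃ w, Flow G η v w} := fun k => f^[k] ⟨v0, h0⟩
  let u' : ℕ → Fin m := fun k => (seq k).1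
  have hstep' : ∀ k, Flow G η (u' k) (u' (k+1)) := by
    intro k
    have : seq (k+1) = f (seq k) := Function.iterate_succ_apply' f k _
    show Flow G η (seq k).1 (seq (k+1)).1
    rw [this]
    exact Classical.choose_spec (seq k).2
  -- pigeonhole
  have hmpos : 0 < m := Fin.pos v0
  have hcard : Fintype.card (Fin m) < Fintype.card (Fin (m+1)) := by simp
  obtain ⟨x, y, hxy, hval⟩ :=
    Fintype.exists_ne_map_eq_of_card_lt (fun k : Fin (m+1) => u' k.1) hcard
  have hP : ∃ b, ∃ a, a < b ∧ u' a = u' b := by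
    rcases Nat.lt_or_ge x.1 y.1 with h | h
    · exact ⟨y.1, x.1, h, hval⟩
    · have : y.1 < x.1 := by
        rcases Nat.lt_or_ge y.1 x.1 with h' | h'
        · exact h'
        · exact absurd (Fin.ext (le_antisymm h' h)) hxy
      exact ⟨x.1, y.1, this, hval.symm⟩
  classical
  let b0 := Nat.find hP
  obtain ⟨a, ha, heq⟩ : ∃ a, a < b0 ∧ u' a = u' b0 := Nat.find_spec hP
  have hmin : ∀ b' < b0, ¬∃ a', a' < b' ∧ u' a' = u' b' := fun b' hb' => Nat.find_min hP hb'
  set r := b0 - a with hrdef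
  have hr0 : 0 < r := by omega
  let u : ℕ → Fin m := fun i => u' (a + i)
  -- successor formula
  have hur : ∀ i < r, u ((i+1)%r) = u' (a+i+1) := by
    intro i hi
    rcases Nat.lt_or_ge (i+1) r with h | h
    · show u' (a + (i+1)%r) = u' (a+i+1)
      rw [Nat.mod_eq_of_lt h]
      ring_nf
    · have h1 : i + 1 = r := by omega
      have h2 : (i+1) % r = 0 := by rw [h1, Nat.mod_self]
      show u' (a + (i+1)%r) = u' (a+i+1)
      rw [h2]
      have h3 : a + i + 1 = b0 := by omega
      rw [h3]
      simpa using heq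
  -- injectivity
  have huinj : ∀ i < r, ∀ i' < r, u i = u i' → i = i' := by
    intro i hi i' hi' hval
    by_contra hne'
    rcases Nat.lt_or_ge i i' with h | h
    · exact hmin (a+i') (by omega) ⟨a+i, by omega, hval⟩
    · have h' : i' < i := by omega
      exact hmin (a+i) (by omega) ⟨a+i', by omega, hval.symm⟩
  -- signed steps
  have hsteps : ∀ i < r, ∃ j,
      (G.src j = u i ∧ G.tgt j = u ((i+1)%r) ∧ 0 < η j) ∨
      (G.src j = u ((i+1)%r) ∧ G.tgt j = u i ∧ η j < 0) := by
    intro i hi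
    have := hstep' (a+i)
    rw [show a + i + 1 = a + i + 1 from rfl] at this
    obtain ⟨j, hj⟩ := this
    refine ⟨j, ?_⟩
    rw [hur i hi]
    exact hj
  -- r ≥ 3
  have hr3 : 3 ≤ r := by
    by_contra hlt
    push_neg at hlt
    have h12 : r = 1 ∨ r = 2 := by omega
    rcases h12 with h | h
    · -- r = 1 : loop
      obtain ⟨j, hj⟩ := hsteps 0 (by omega)
      have e : (0+1)%r = 0 := by rw [h]
      rw [e] at hj
      rcases hj with ⟨h1, h2, _⟩ | ⟨h1, h2, _⟩ <;> exact G.loopless j (h1.trans h2.symm)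
    · -- r = 2 : double edge
      have hvw : u 0 ≠ u 1 := by
        intro hval
        exact absurd (huinj 0 (by omega) 1 (by omega) hval) (by omega)
      obtain ⟨j1, hj1⟩ := hsteps 0 (by omega)
      obtain ⟨j2, hj2⟩ := hsteps 1 (by omega)
      have e1 : (0+1)%r = 1 := by rw [h]
      have e2 : (1+1)%r = 0 := by rw [h]
      rw [e1] at hj1
      rw [e2] at hj2
      have hjeq : j1 = j2 := by
        apply G.simple
        rcases hj1 with ⟨a1, b1, _⟩ | ⟨a1, b1, _⟩ <;> rcases hj2 with ⟨a2, b2, _⟩ | ⟨a2, b2, _⟩ <;>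
          rw [a1, b1, a2, b2]
        · exact Finset.pair_comm _ _
        · exact Finset.pair_comm _ _
      subst hjeq
      rcases hj1 with ⟨a1, b1, c1⟩ | ⟨a1, b1, c1⟩ <;> rcases hj2 with ⟨a2, b2, c2⟩ | ⟨a2, b2, c2⟩
      · exact hvw (a1.symm.trans a2)
      · linarith
      · linarith
      · exact hvw (b1.symm.trans b2)
  exact ⟨r, u, ⟨hr3, huinj, fun i hi => (hsteps i hi).imp
    (fun j hj => hj.imp (fun h => ⟨h.1, h.2.1⟩) (fun h => ⟨h.1, h.2.1⟩))⟩, hsteps⟩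


lemma cycVec_sign {η : Fin n → ℝ} (hc : IsSimpleCycle G r u)
    (hsign : ∀ i < r, ∃ j, (G.src j = u i ∧ G.tgt j = u ((i+1)%r) ∧ 0 < η j) ∨
      (G.src j = u ((i+1)%r) ∧ G.tgt j = u i ∧ η j < 0)) (j : Fin n) :
    cycVec G r u j = 0 ∨ (cycVec G r u j = 1 ∧ 0 < η j) ∨ (cycVec G r u j = -1 ∧ η j < 0) := by
  rcases cycVec_spec hc j with ⟨h, -⟩ | ⟨i, hi, hcase⟩
  · exact Or.inl h
  · obtain ⟨j', hj'⟩ := hsign i hi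
    rcases hcase with ⟨hS, hval⟩ | ⟨hT, hval⟩
    · rcases hj' with ⟨a1, a2, a3⟩ | ⟨a1, a2, a3⟩
      · have : j = j' := edge_unique (Or.inl hS) (Or.inl ⟨a1, a2⟩)
        exact Or.inr (Or.inl ⟨hval, this ▸ a3⟩)
      · have : j = j' := edge_unique (Or.inl hS) (Or.inr ⟨a1, a2⟩)
        subst this
        exact absurd ⟨a1, a2⟩ (not_both hc hi hS)
    · rcases hj' with ⟨a1, a2, a3⟩ | ⟨a1, a2, a3⟩
      · have : j = j' := edge_unique (Or.inr hT) (Or.inl ⟨a1, a2⟩)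
        subst this
        exact absurd hT (not_both hc hi ⟨a1, a2⟩)
      · have : j = j' := edge_unique (Or.inr hT) (Or.inr ⟨a1, a2⟩)
        exact Or.inr (Or.inr ⟨hval, this ▸ a3⟩)

lemma l1_nonneg (x : Fin n → ℝ) : 0 ≤ l1 x :=
  Finset.sum_nonneg (fun j _ => abs_nonneg _)

lemma kernel_bound (g : ℕ) (hleast : ∀ r u, IsSimpleCycle G r u → g ≤ r) :
    ∀ N (η : Fin n → ℝ), l0 η ≤ N → (inc G).mulVec η = 0 → ∀ j, (g:ℝ) * |η j| ≤ l1 η := by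
  intro N
  induction N with
  | zero =>
    intro η hN hker j
    have : η j = 0 := by
      by_contra h
      have : j ∈ Finset.univ.filter (fun i => η i ≠ 0) := Finset.mem_filter.2 ⟨Finset.mem_univ _, h⟩
      have := Finset.card_pos.2 ⟨j, this⟩
      unfold l0 at hN
      omega
    rw [this, abs_zero, mul_zero]
    exact l1_nonneg η
  | succ N ih =>
    intro η hN hker j
    by_cases hz : η = 0
    · subst hz
      simp [l1]
    · obtain ⟨r, u, hc, hsign⟩ := exists_signed_cycle hker hz
      set w := cycVec G r u with hwdef
      have hvals : ∀ j', w j' = 0 ∨ (w j' = 1 ∧ 0 < η j') ∨ (w j' = -1 ∧ η j' < 0) :=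
        cycVec_sign hc hsign
      have hr3 := hc.1
      have hl1w : l1 w = r := l1_cycVec hc
      have hl0w : l0 w = r := l0_cycVec hc
      have hkerw : (inc G).mulVec w = 0 := mulVec_cycVec hc
      set T := Finset.univ.filter (fun j' => w j' ≠ 0) with hTdef
      have hT : T.Nonempty := by
        apply Finset.card_pos.1
        have hTc : T.card = r := hl0w
        omega
      set c := T.inf' hT (fun j' => |η j'|) with hcdef
      have hηT : ∀ j' ∈ T, η j' ≠ 0 := by
        intro j' hj'
        have hwne : w j' ≠ 0 := (Finset.mem_filter.1 hj').2
        rcases hvals j' with h | ⟨-, h⟩ | ⟨-, h⟩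
        · exact absurd h hwne
        · exact ne_of_gt h
        · exact ne_of_lt h
      have hc_pos : 0 < c := by
        rw [hcdef, Finset.lt_inf'_iff]
        exact fun j' hj' => abs_pos.2 (hηT j' hj')
      have hc_le : ∀ j' ∈ T, c ≤ |η j'| := fun j' hj' => Finset.inf'_le _ hj'
      obtain ⟨js, hjs, hjsval⟩ := Finset.exists_mem_eq_inf' hT (fun j' => |η j'|)
      set η' : Fin n → ℝ := fun j' => η j' - c * w j' with hη'def
      have hker' : (inc G).mulVec η' = 0 := by
        have he : η' = η - c • w := by funext j'; simp [hη'def]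
        rw [he, Matrix.mulVec_sub, hker, Matrix.mulVec_smul, hkerw, smul_zero, sub_zero]
      have hwmem : ∀ j', w j' ≠ 0 → j' ∈ T := fun j' h =>
        Finset.mem_filter.2 ⟨Finset.mem_univ _, h⟩
      have hpt : ∀ j', |η' j'| = |η j'| - c * |w j'| := by
        intro j'
        rcases hvals j' with h | ⟨h, hp⟩ | ⟨h, hp⟩
        · simp [hη'def, h]
        · have hle : c ≤ η j' := by
            have := hc_le j' (hwmem j' (by rw [h]; norm_num))
            rwa [abs_of_pos hp] at this
          simp only [hη'def, h]
          rw [abs_of_nonneg (show (0:ℝ) ≤ η j' - c * 1 by linarith), abs_of_pos hp]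
          norm_num
        · have hle : c ≤ -η j' := by
            have := hc_le j' (hwmem j' (by rw [h]; norm_num))
            rwa [abs_of_neg hp] at this
          simp only [hη'def, h]
          rw [abs_of_nonpos (show η j' - c * (-1) ≤ 0 by linarith), abs_of_neg hp]
          norm_num
          ring
      have hl1' : l1 η' = l1 η - c * r := by
        unfold l1
        rw [Finset.sum_congr rfl (fun j' _ => hpt j')]
        rw [Finset.sum_sub_distrib, ← Finset.mul_sum]
        have : ∑ j', |w j'| = l1 w := rfl
        rw [this, hl1w]
      have hjs0 : η' js = 0 := by
        have hwne : w js ≠ 0 := (Finset.mem_filter.1 hjs).2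
        rcases hvals js with h | ⟨h, hp⟩ | ⟨h, hp⟩
        · exact absurd h hwne
        · have hcval : c = η js := by rw [hcdef, hjsval, abs_of_pos hp]
          show η js - c * w js = 0
          rw [h, hcval]; ring
        · have hcval : c = -η js := by rw [hcdef, hjsval, abs_of_neg hp]
          show η js - c * w js = 0
          rw [h, hcval]; ring
      have hsub : Finset.univ.filter (fun j' => η' j' ≠ 0) ⊂
          Finset.univ.filter (fun j' => η j' ≠ 0) := by
        rw [Finset.ssubset_iff_of_subset]
        · refine ⟨js, ?_, ?_⟩
          · exact Finset.mem_filter.2 ⟨Finset.mem_univ _, hηT js hjs⟩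
          · simp only [Finset.mem_filter, Finset.mem_univ, true_and, not_not]
            exact hjs0
        · intro j' hj'
          have hne' : η' j' ≠ 0 := (Finset.mem_filter.1 hj').2
          refine Finset.mem_filter.2 ⟨Finset.mem_univ _, ?_⟩
          intro hη0
          rcases hvals j' with h | ⟨-, h⟩ | ⟨-, h⟩
          · apply hne'
            show η j' - c * w j' = 0
            rw [h, hη0]; ring
          · exact absurd hη0 (ne_of_gt h)
          · exact absurd hη0 (ne_of_lt h)
      have hl0' : l0 η' ≤ N := by
        have hlt := Finset.card_lt_card hsub
        unfold l0 at hN ⊢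
        omega
      have hIH := ih η' hl0' hker' j
      have hgr : (g:ℝ) ≤ r := by exact_mod_cast hleast r u hc
      have hwle : |w j| ≤ 1 := by
        rcases hvals j with h | ⟨h, -⟩ | ⟨h, -⟩ <;> rw [h] <;> norm_num
      have habs : |η j| ≤ |η' j| + c * |w j| := by
        have he : η j = η' j + c * w j := by show η j = (η j - c * w j) + c * w j; ring
        rw [he]
        calc |η' j + c * w j| ≤ |η' j| + |c * w j| := abs_add_le _ _
        _ = |η' j| + c * |w j| := by rw [abs_mul, abs_of_pos hc_pos]
      have hgnn : (0:ℝ) ≤ g := Nat.cast_nonneg g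
      have hwnn : (0:ℝ) ≤ |w j| := abs_nonneg _
      nlinarith [mul_le_mul_of_nonneg_left habs hgnn,
        mul_le_mul_of_nonneg_left hwle (mul_nonneg hgnn hc_pos.le),
        mul_le_mul_of_nonneg_left hgr hc_pos.le, hIH, hl1']


lemma girth_facts (g : ℕ) (hg : dgirth G = (g : ℕ∞)) :
    (∃ u, IsSimpleCycle G g u) ∧ ∀ r u, IsSimpleCycle G r u → g ≤ r := by
  have hleast : ∀ r u, IsSimpleCycle G r u → g ≤ r := by
    intro r u hc
    have hmem : (r:ℕ∞) ∈ {r : ℕ∞ | ∃ (k : ℕ) (u : ℕ → Fin m), IsSimpleCycle G k u ∧ r = (k:ℕ∞)} :=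
      ⟨r, u, hc, rfl⟩
    have hle : dgirth G ≤ (r:ℕ∞) := sInf_le hmem
    rw [hg] at hle
    exact_mod_cast hle
  have hne : {r : ℕ∞ | ∃ (k : ℕ) (u : ℕ → Fin m), IsSimpleCycle G k u ∧ r = (k:ℕ∞)}.Nonempty := by
    by_contra h
    rw [Set.not_nonempty_iff_eq_empty] at h
    have : dgirth G = ⊤ := by unfold dgirth; rw [h]; exact sInf_empty
    rw [hg] at this
    simp at this
  obtain ⟨xx, k, u, hck, hx⟩ := hne
  have hS' : ∃ k : ℕ, ∃ u, IsSimpleCycle G k u := ⟨k, u, hck⟩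
  classical
  obtain ⟨u0, hu0⟩ := Nat.find_spec hS'
  have hk0le : ∀ k' u', IsSimpleCycle G k' u' → Nat.find hS' ≤ k' :=
    fun k' u' hc' => Nat.find_min' hS' ⟨u', hc'⟩
  have hdg : dgirth G = (Nat.find hS' : ℕ∞) := by
    apply le_antisymm
    · exact sInf_le ⟨Nat.find hS', u0, hu0, rfl⟩
    · apply le_sInf
      rintro b ⟨k', u', hc', rfl⟩
      exact_mod_cast hk0le k' u' hc'
  rw [hg] at hdg
  have hgk : g = Nat.find hS' := by exact_mod_cast hdg
  rw [hgk]
  exact ⟨⟨u0, hu0⟩, fun r u hc => hgk ▸ hleast r u hc⟩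

end Aux

open Aux in
theorem stmt14' {m n : ℕ} (G : DiGraph m n) (hconn : (toSG G).Connected)
    (g : ℕ) (hg : dgirth G = (g : ℕ∞)) (s : ℕ) :
    (∀ xb : Fin n → ℝ, l0 xb ≤ s →
        ∀ x : Fin n → ℝ, (inc G).mulVec x = (inc G).mulVec xb → x ≠ xb →
          l1 xb < l1 x) ↔ 2 * s < g := by
  obtain ⟨⟨u, hc⟩, hleast⟩ := girth_facts (G := G) g hg
  have hg3 : 3 ≤ g := hc.1
  constructor
  · -- recovery → 2s < g
    intro hrec
    by_contra hlt
    push_neg at hlt   -- g ≤ 2s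
    set w := cycVec G g u with hwdef
    have hl0w : l0 w = g := l0_cycVec hc
    have hl1w : l1 w = (g:ℝ) := l1_cycVec hc
    have hvals : ∀ j, w j = 0 ∨ w j = 1 ∨ w j = -1 := cycVec_vals hc
    have hkerw : (inc G).mulVec w = 0 := mulVec_cycVec hc
    set T := Finset.univ.filter (fun j => w j ≠ 0) with hTdef
    have hTcard : T.card = g := hl0w
    set t := min s g with htdef
    obtain ⟨S, hST, hScard⟩ := Finset.exists_subset_card_eq (s := T) (n := t)
      (by rw [hTcard]; exact min_le_right s g)
    set xb : Fin n → ℝ := fun j => if j ∈ S then w j else 0 with hxbdef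
    set x : Fin n → ℝ := fun j => xb j - w j with hxdef
    have hwabs : ∀ j ∈ T, |w j| = 1 := by
      intro j hj
      have hwne : w j ≠ 0 := (Finset.mem_filter.1 hj).2
      rcases hvals j with h | h | h
      · exact absurd h hwne
      · rw [h]; norm_num
      · rw [h]; norm_num
    have hl0xb : l0 xb ≤ s := by
      have hsub : Finset.univ.filter (fun j => xb j ≠ 0) ⊆ S := by
        intro j hj
        by_contra hjS
        have : xb j = 0 := by simp [hxbdef, hjS]
        exact (Finset.mem_filter.1 hj).2 this
      calc l0 xb ≤ S.card := Finset.card_le_card hsub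
      _ = t := hScard
      _ ≤ s := min_le_left s g
    have hAx : (inc G).mulVec x = (inc G).mulVec xb := by
      have hxe : x = xb - w := rfl
      rw [hxe, Matrix.mulVec_sub, hkerw, sub_zero]
    have hxne : x ≠ xb := by
      intro h
      have hTne : T.Nonempty := Finset.card_pos.1 (by omega)
      obtain ⟨j1, hj1⟩ := hTne
      have h1 : x j1 = xb j1 := congrFun h j1
      have h2 : xb j1 - w j1 = xb j1 := h1
      exact (Finset.mem_filter.1 hj1).2 (by linarith)
    have habs_xb : ∀ j, |xb j| = if j ∈ S then (1:ℝ) else 0 := by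
      intro j
      by_cases hj : j ∈ S
      · rw [if_pos hj]
        show |if j ∈ S then w j else 0| = 1
        rw [if_pos hj]
        exact hwabs j (hST hj)
      · rw [if_neg hj]
        show |if j ∈ S then w j else 0| = 0
        rw [if_neg hj, abs_zero]
    have habs_x : ∀ j, |x j| = (if j ∈ T then (1:ℝ) else 0) - (if j ∈ S then (1:ℝ) else 0) := by
      intro j
      by_cases hj : j ∈ S
      · rw [if_pos hj, if_pos (hST hj)]
        show |(if j ∈ S then w j else 0) - w j| = 1 - 1
        rw [if_pos hj]
        simp
      · rw [if_neg hj]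
        by_cases hjT : j ∈ T
        · rw [if_pos hjT]
          show |(if j ∈ S then w j else 0) - w j| = 1 - 0
          rw [if_neg hj]
          rw [zero_sub, abs_neg]
          rw [hwabs j hjT]
          norm_num
        · rw [if_neg hjT]
          have hw0 : w j = 0 := by
            by_contra h
            exact hjT (Finset.mem_filter.2 ⟨Finset.mem_univ _, h⟩)
          show |(if j ∈ S then w j else 0) - w j| = 0 - 0
          rw [if_neg hj, hw0]
          norm_num
    have hsumS : ∑ j : Fin n, (if j ∈ S then (1:ℝ) else 0) = t := by
      rw [Finset.sum_ite_mem, Finset.univ_inter, Finset.sum_const, hScard]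
      simp
    have hsumT : ∑ j : Fin n, (if j ∈ T then (1:ℝ) else 0) = g := by
      rw [Finset.sum_ite_mem, Finset.univ_inter, Finset.sum_const, hTcard]
      simp
    have hlxb : l1 xb = t := by
      unfold l1
      rw [Finset.sum_congr rfl (fun j _ => habs_xb j), hsumS]
    have hlx : l1 x = (g:ℝ) - t := by
      unfold l1
      rw [Finset.sum_congr rfl (fun j _ => habs_x j), Finset.sum_sub_distrib, hsumS, hsumT]
    have hfin := hrec xb hl0xb x hAx hxne
    rw [hlxb, hlx] at hfin
    have : 2 * t < g := by exact_mod_cast (by linarith : (2 * t : ℝ) < g)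
    omega
  · -- 2s < g → recovery
    intro h2s xb hxb x hA hne
    set η : Fin n → ℝ := fun j => x j - xb j with hηdef
    have hηne : η ≠ 0 := by
      intro h
      apply hne
      funext j
      have := congrFun h j
      have h2 : x j - xb j = 0 := this
      linarith
    have hkerη : (inc G).mulVec η = 0 := by
      have hηe : η = x - xb := rfl
      rw [hηe, Matrix.mulVec_sub, hA, sub_self]
    have hbound : ∀ j, (g:ℝ) * |η j| ≤ l1 η :=
      kernel_bound g hleast (l0 η) η le_rfl hkerη
    have hl1pos : 0 < l1 η := by
      obtain ⟨j0, hj0⟩ := Function.ne_iff.1 hηne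
      have h1 : 0 < |η j0| := abs_pos.2 hj0
      have h2 : |η j0| ≤ l1 η :=
        Finset.single_le_sum (fun j _ => abs_nonneg (η j)) (Finset.mem_univ j0)
      linarith
    set S := Finset.univ.filter (fun j => xb j ≠ 0) with hSdef
    have hScard : S.card ≤ s := hxb
    have hSig : (g:ℝ) * (∑ j ∈ S, |η j|) ≤ (s:ℝ) * l1 η := by
      rw [Finset.mul_sum]
      calc ∑ j ∈ S, (g:ℝ) * |η j| ≤ ∑ j ∈ S, l1 η :=
        Finset.sum_le_sum (fun j _ => hbound j)
      _ = S.card * l1 η := by rw [Finset.sum_const]; simp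
      _ ≤ (s:ℝ) * l1 η := by
          apply mul_le_mul_of_nonneg_right _ hl1pos.le
          exact_mod_cast hScard
    have hkey : 2 * (∑ j ∈ S, |η j|) < l1 η := by
      have hgpos : (3:ℝ) ≤ g := by exact_mod_cast hg3
      have h2sg : ((2*s : ℕ):ℝ) < (g:ℝ) := by exact_mod_cast h2s
      push_cast at h2sg
      nlinarith [Finset.sum_nonneg (fun j (_ : j ∈ S) => abs_nonneg (η j))]
    have hsplit_x := Finset.sum_filter_add_sum_filter_not Finset.univ
      (fun j => xb j ≠ 0) (fun j => |x j|)
    have hsplit_η := Finset.sum_filter_add_sum_filter_not Finset.univ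
      (fun j => xb j ≠ 0) (fun j => |η j|)
    have hsplit_xb := Finset.sum_filter_add_sum_filter_not Finset.univ
      (fun j => xb j ≠ 0) (fun j => |xb j|)
    have hNxb : ∑ j ∈ Finset.univ.filter (fun j => ¬ xb j ≠ 0), |xb j| = 0 := by
      apply Finset.sum_eq_zero
      intro j hj
      have : xb j = 0 := not_not.1 (Finset.mem_filter.1 hj).2
      rw [this, abs_zero]
    have hNx : ∑ j ∈ Finset.univ.filter (fun j => ¬ xb j ≠ 0), |x j| =
        ∑ j ∈ Finset.univ.filter (fun j => ¬ xb j ≠ 0), |η j| := by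
      apply Finset.sum_congr rfl
      intro j hj
      have h0 : xb j = 0 := not_not.1 (Finset.mem_filter.1 hj).2
      show |x j| = |x j - xb j|
      rw [h0, sub_zero]
    have hSx : ∑ j ∈ S, |xb j| - ∑ j ∈ S, |η j| ≤ ∑ j ∈ S, |x j| := by
      rw [← Finset.sum_sub_distrib]
      apply Finset.sum_le_sum
      intro j hj
      have h1 : |xb j| ≤ |x j| + |η j| := by
        have he : xb j = x j - η j := by show xb j = x j - (x j - xb j); ring
        rw [he]
        exact abs_sub _ _
      linarith
    show l1 xb < l1 x
    unfold l1
    have e1 : ∑ j : Fin n, |xb j| = ∑ j ∈ S, |xb j| := by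
      rw [← hsplit_xb, hNxb, add_zero]
    rw [e1, ← hsplit_x, hNx]
    have e2 : ∑ j ∈ Finset.univ.filter (fun j => ¬ xb j ≠ 0), |η j| =
        (∑ j : Fin n, |η j|) - ∑ j ∈ S, |η j| := by
      have := hsplit_η
      linarith
    rw [e2]
    have hl1η : l1 η = ∑ j : Fin n, |η j| := rfl
    linarith [hSx, hkey, hl1η ▸ hkey]



theorem stmt14 {m n : ℕ} (G : DiGraph m n) (hconn : (toSG G).Connected)
    (g : ℕ) (hg : dgirth G = (g : ℕ∞)) (s : ℕ) :
    (∀ xb : Fin n → ℝ, l0 xb ≤ s →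
        ∀ x : Fin n → ℝ, (inc G).mulVec x = (inc G).mulVec xb → x ≠ xb →
          l1 xb < l1 x) ↔ 2 * s < g := stmt14' G hconn g hg s
end
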